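/- For fixed d ≥ 0 there exists a constant C > 0 such that for all n ≥ 2, the number of permutations of {1,…,n} with exactly d kinks is at most C·(2(d+1))^n. -/

import Mathlib

open scoped Classical

noncomputable def numKinks {n : ℕ} (π : Equiv.Perm (Fin n)) : ℕ :=
  (Finset.univ.filter (fun i : Fin n =>
    0 < (i : ℕ) ∧ ∀ j : Fin n, (j : ℕ) < (i : ℕ) →
      (π j : ℕ) + 1 ≠ (π i : ℕ) ∧ (π i : ℕ) + 1 ≠ (π j : ℕ))).card

noncomputable def F (n d : ℕ) : ℕ :=
  (Finset.univ.filter (fun π : Equiv.Perm (Fin n) => numKinks π = d)).card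

/-!
Read a permutation `π` through its inverse `σ = π⁻¹`, which records when each value appears.
A position is a kink exactly when its value is a valley (strict local minimum) of `σ` other than
`π 0`, so `σ` has `d + 1` valleys. Cutting the values into maximal runs on which `σ` is monotone
and numbering the runs from left to right, with odd numbers on increasing runs and even ones on
decreasing runs, uses only labels below `2 (d + 1)`. The word `t ↦ label (π t)` determines `π`:
sorting it gives back the labels of the values, and on each run `σ` is the unique monotone
bijection onto the positions carrying that label. Counting words gives the bound with `C = 1`.
-/

open Finset Function

section Order

variable {α β : Type*}

theorem StrictMonoOn.eqOn_of_image_eq [LinearOrder α] [WellFoundedLT α] [Preorder β]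
    {f g : α → β} {s : Set α} (hf : StrictMonoOn f s) (hg : StrictMonoOn g s)
    (h : f '' s = g '' s) : s.EqOn f g := by
  have := (hf.domRestrict.range_inj hg.domRestrict).mp (by simpa [Set.range_domRestrict])
  exact fun x hx => congrFun this ⟨x, hx⟩

theorem StrictAntiOn.eqOn_of_image_eq [LinearOrder α] [WellFoundedLT α] [Preorder β]
    {f g : α → β} {s : Set α} (hf : StrictAntiOn f s) (hg : StrictAntiOn g s)
    (h : f '' s = g '' s) : s.EqOn f g := by
  have := hf.dual_right.eqOn_of_image_eq hg.dual_right
    (by simp only [Set.image_comp, h])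
  exact fun x hx => OrderDual.toDual.injective (this hx)

theorem strictMonoOn_of_covBy [Preorder α] [LocallyFiniteOrder α] [Preorder β] {f : α → β}
    {s : Set α} (hs : s.OrdConnected) (hf : ∀ a ∈ s, ∀ b ∈ s, a ⋖ b → f a < f b) :
    StrictMonoOn f s := by
  intro a ha b hb hab
  induction lt_iff_transGen_covBy.mp hab with
  | single hac => exact hf a ha _ hb hac
  | @tail c b hac hcb ih =>
    have hc : c ∈ s := hs.out ha hb ⟨(lt_iff_transGen_covBy.mpr hac).le, hcb.le⟩
    exact (ih hc (lt_iff_transGen_covBy.mpr hac)).trans (hf c hc b hb hcb)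

theorem strictAntiOn_of_covBy [Preorder α] [LocallyFiniteOrder α] [Preorder β] {f : α → β}
    {s : Set α} (hs : s.OrdConnected) (hf : ∀ a ∈ s, ∀ b ∈ s, a ⋖ b → f b < f a) :
    StrictAntiOn f s :=
  strictMonoOn_of_covBy (β := βᵒᵈ) hs hf

end Order

section Valleys

variable {α β : Type*} [LinearOrder α] [LinearOrder β] {f : α → β} {a b c : α}

def AscendsAt (f : α → β) (a : α) : Prop := ∀ b, a ⋖ b → f a < f b

def IsValley (f : α → β) (a : α) : Prop := ∀ b, a ⋖ b ∨ b ⋖ a → f a < f b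

theorem ascendsAt_iff (hab : a ⋖ b) : AscendsAt f a ↔ f a < f b :=
  ⟨fun h => h b hab, fun h _ hac => hab.unique_right hac ▸ h⟩

theorem not_ascendsAt_iff (hf : Injective f) (hab : a ⋖ b) : ¬AscendsAt f a ↔ f b < f a := by
  rw [ascendsAt_iff hab, not_lt, le_iff_lt_or_eq, or_iff_left (hf.ne hab.lt.ne')]

theorem isValley_iff (hf : Injective f) :
    IsValley f a ↔ AscendsAt f a ∧ ∀ b, b ⋖ a → ¬AscendsAt f b := by
  simp only [IsValley, or_imp, forall_and]
  exact and_congr Iff.rfl (forall₂_congr fun b hba => (not_ascendsAt_iff hf hba).symm)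

theorem exists_isValley_le [WellFoundedLT α] (hf : Injective f) (ha : AscendsAt f a) :
    ∃ b ≤ a, IsValley f b := by
  induction a using WellFoundedLT.induction with
  | _ a ih =>
    by_cases hv : IsValley f a
    · exact ⟨a, le_rfl, hv⟩
    obtain ⟨b, hba, hb⟩ : ∃ b, b ⋖ a ∧ AscendsAt f b := by
      simpa [isValley_iff hf, ha] using hv
    obtain ⟨c, hcb, hc⟩ := ih b hba.lt hb
    exact ⟨c, hcb.trans hba.le, hc⟩

theorem exists_isValley_gt [WellFoundedGT α] (hf : Injective f) (ha : ¬AscendsAt f a) :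
    ∃ b > a, IsValley f b := by
  induction a using WellFoundedGT.induction with
  | _ a ih =>
    obtain ⟨c, hac, -⟩ : ∃ c, a ⋖ c ∧ ¬f a < f c := by simpa [AscendsAt] using ha
    by_cases hc : AscendsAt f c
    · exact ⟨c, hac.lt, (isValley_iff hf).2 ⟨hc, fun b hbc => hac.unique_left hbc ▸ ha⟩⟩
    · obtain ⟨b, hcb, hb⟩ := ih c hac.lt hc
      exact ⟨b, hac.lt.trans hcb, hb⟩

variable [Fintype α]

noncomputable def valleyCount (f : α → β) (a : α) : ℕ := #{b | b ≤ a ∧ IsValley f b}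

theorem valleyCount_of_covBy (hac : a ⋖ c) :
    valleyCount f c = valleyCount f a + if IsValley f c then 1 else 0 := by
  have hle : ∀ b, b ≤ c ↔ b ≤ a ∨ b = c := fun b => by
    rw [le_iff_lt_or_eq, hac.lt_iff_le_left]
  unfold valleyCount
  split_ifs with hc
  · rw [← card_insert_of_notMem (a := c) (by simp [hac.lt.not_ge])]
    congr 1
    ext b
    simp only [mem_filter, mem_univ, true_and, mem_insert, hle]
    grind
  · congr 1
    ext b
    simp only [mem_filter, mem_univ, true_and, hle]
    grind

theorem valleyCount_le (a : α) : valleyCount f a ≤ #{b | IsValley f b} :=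
  card_le_card fun b => by simp +contextual

theorem valleyCount_pos (hf : Injective f) (ha : AscendsAt f a) : 0 < valleyCount f a := by
  obtain ⟨b, hba, hb⟩ := exists_isValley_le hf ha
  exact card_pos.mpr ⟨b, by simp [hba, hb]⟩

theorem valleyCount_lt (hf : Injective f) (ha : ¬AscendsAt f a) :
    valleyCount f a < #{b | IsValley f b} := by
  obtain ⟨b, hab, hb⟩ := exists_isValley_gt hf ha
  refine card_lt_card ⟨fun b => by simp +contextual, fun h => ?_⟩
  simpa [hab.not_ge] using h (by simpa using hb : b ∈ ({b | IsValley f b} : Finset α))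

-- The `k`-th valley opens the increasing run labelled `2k - 1`; the decreasing run before it
-- is labelled `2k - 2`.
noncomputable def runLabel (f : α → β) (a : α) : ℕ :=
  2 * valleyCount f a - if AscendsAt f a then 1 else 0

theorem odd_runLabel_iff (hf : Injective f) : Odd (runLabel f a) ↔ AscendsAt f a := by
  by_cases ha : AscendsAt f a
  · have := valleyCount_pos hf ha
    simp only [runLabel, ha, if_true, iff_true, Nat.odd_iff]
    omega
  · simp [runLabel, ha]

theorem runLabel_lt (hf : Injective f) (a : α) : runLabel f a < 2 * #{b | IsValley f b} := by
  have := valleyCount_le (f := f) a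
  by_cases ha : AscendsAt f a
  · have := valleyCount_pos hf ha
    simp only [runLabel, ha, if_true]
    omega
  · have := valleyCount_lt hf ha
    simp only [runLabel, ha, if_false]
    omega

theorem monotone_runLabel [LocallyFiniteOrder α] (hf : Injective f) : Monotone (runLabel f) := by
  refine (monotone_iff_forall_covBy _).2 fun a c hac => ?_
  simp only [runLabel, valleyCount_of_covBy hac]
  by_cases hc : AscendsAt f c
  · by_cases ha : AscendsAt f a
    · simp only [ha, hc, if_true]
      omega
    · have hv : IsValley f c := (isValley_iff hf).2 ⟨hc, fun b hbc => hac.unique_left hbc ▸ ha⟩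
      simp only [ha, hc, hv, if_true, if_false]
      omega
  · have hv : ¬IsValley f c := fun h => hc ((isValley_iff hf).1 h).1
    simp only [hc, hv, if_false]
    omega

end Valleys

section RunLabeling

def IsRunLabeling {α β : Type*} [Preorder α] [Preorder β] (σ : α → β) (c : α → ℕ) : Prop :=
  Monotone c ∧ ∀ j, (Odd j → StrictMonoOn σ (c ⁻¹' {j})) ∧ (Even j → StrictAntiOn σ (c ⁻¹' {j}))

theorem isRunLabeling_runLabel {α β : Type*} [LinearOrder α] [Fintype α] [LocallyFiniteOrder α]
    [LinearOrder β] {f : α → β} (hf : Injective f) : IsRunLabeling f (runLabel f) := by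
  have hfib (j : ℕ) : (runLabel f ⁻¹' {j}).OrdConnected :=
    Set.ordConnected_singleton.preimage_mono (monotone_runLabel hf)
  refine ⟨monotone_runLabel hf, fun j => ⟨fun hj => ?_, fun hj => ?_⟩⟩
  · refine strictMonoOn_of_covBy (hfib j) fun a ha b _ hab => (ascendsAt_iff hab).1 ?_
    rwa [← odd_runLabel_iff hf, ha]
  · refine strictAntiOn_of_covBy (hfib j) fun a ha b _ hab => (not_ascendsAt_iff hf hab).1 ?_
    rwa [← odd_runLabel_iff hf, ha, Nat.not_odd_iff_even]

variable {n : ℕ}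

theorem Equiv.Perm.eq_of_isRunLabeling {π τ : Equiv.Perm (Fin n)} {c d : Fin n → ℕ}
    (hπ : IsRunLabeling π.symm c) (hτ : IsRunLabeling τ.symm d) (h : c ∘ π = d ∘ τ) :
    π = τ := by
  have hcd : c = d :=
    calc c = (c ∘ π) ∘ π.symm := by simp [comp_assoc]
      _ = (c ∘ π) ∘ τ.symm := Tuple.unique_monotone (by simpa [comp_assoc] using hπ.1)
          (by simpa [h, comp_assoc] using hτ.1)
      _ = d := by simp [h, comp_assoc]
  subst hcd
  have himage (j : ℕ) : π.symm '' (c ⁻¹' {j}) = τ.symm '' (c ⁻¹' {j}) := by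
    simp only [Equiv.image_eq_preimage_symm, Equiv.symm_symm, ← Set.preimage_comp, h]
  refine Equiv.symm_bijective.injective (Equiv.ext fun v => ?_)
  obtain hodd | heven := (c v).even_or_odd.symm
  · exact ((hπ.2 _).1 hodd).eqOn_of_image_eq ((hτ.2 _).1 hodd) (himage _) rfl
  · exact ((hπ.2 _).2 heven).eqOn_of_image_eq ((hτ.2 _).2 heven) (himage _) rfl

theorem card_le_pow_of_isRunLabeling (s : Finset (Equiv.Perm (Fin n))) (k : ℕ)
    (c : Equiv.Perm (Fin n) → Fin n → ℕ) (hc : ∀ π ∈ s, IsRunLabeling π.symm (c π))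
    (hk : ∀ π ∈ s, ∀ v, c π v < k) : #s ≤ k ^ n := by
  calc #s ≤ #(Fintype.piFinset fun _ : Fin n => range k) := by
        refine card_le_card_of_injOn (fun π => c π ∘ π) (fun π hπ => ?_)
          fun π hπ τ hτ h => Equiv.Perm.eq_of_isRunLabeling (hc π hπ) (hc τ hτ) h
        simpa [Fintype.mem_piFinset] using fun t => hk π hπ (π t)
    _ = k ^ n := by simp [Fintype.card_piFinset]

end RunLabeling

section Kinks

variable {n : ℕ}

theorem isValley_symm_apply_iff (π : Equiv.Perm (Fin n)) (i : Fin n) :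
    IsValley π.symm (π i) ↔
      ∀ j : Fin n, (j : ℕ) < i → (π j : ℕ) + 1 ≠ π i ∧ (π i : ℕ) + 1 ≠ π j := by
  rw [IsValley, ← π.forall_congr_right]
  simp only [Equiv.symm_apply_apply, Fin.covBy_iff, Nat.covBy_iff_add_one_eq]
  refine forall_congr' fun j => ?_
  rcases lt_trichotomy j i with hji | rfl | hij
  · simp only [hji.not_gt, imp_false, not_or, Fin.lt_def.mp hji, ne_eq, forall_const]
    omega
  · simp
  · simp [hij, (Fin.lt_def.mp hij).not_gt]

theorem numKinks_add_one_eq_card_isValley [NeZero n] (π : Equiv.Perm (Fin n)) :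
    numKinks π + 1 = #{v | IsValley π.symm v} := by
  have h0 : IsValley π.symm (π 0) :=
    (isValley_symm_apply_iff π 0).2 fun j hj => absurd hj (Nat.not_lt_zero _)
  have hkinks : numKinks π = #{i | i ≠ 0 ∧ IsValley π.symm (π i)} := by
    simp only [numKinks, isValley_symm_apply_iff, Nat.pos_iff_ne_zero, Fin.val_ne_zero_iff]
  rw [hkinks, ← card_insert_of_notMem (a := 0) (by simp)]
  refine card_equiv π fun i => ?_
  by_cases hi : i = 0 <;> simp [hi, h0]

end Kinks

theorem F_upper_bound (d : ℕ) :
    ∃ C : ℝ, 0 < C ∧ ∀ n : ℕ, 2 ≤ n → (F n d : ℝ) ≤ C * (2 * ((d : ℝ) + 1)) ^ n := by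
  refine ⟨1, one_pos, fun n hn => ?_⟩
  have : NeZero n := ⟨by omega⟩
  have hF : F n d ≤ (2 * (d + 1)) ^ n := by
    refine card_le_pow_of_isRunLabeling _ _ (fun π => runLabel π.symm)
      (fun π _ => isRunLabeling_runLabel π.symm.injective) fun π hπ v => ?_
    rw [mem_filter] at hπ
    simpa [← hπ.2, numKinks_add_one_eq_card_isValley] using runLabel_lt π.symm.injective v
  rw [one_mul]
  exact_mod_cast hF
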